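/- arXiv:2009.11216 — 3 statements merged into one kernel-verified Lean document; each statement's English description precedes it below -/
import Mathlib

section
/- For every a = (a₁, a₂) ∈ S: (1) h(ẑ(a)) = ∇₂g(a) · a₂ − g(a); and (2) g is differentiable with respect to its first argument at a, with partial gradient ∇₁g(a) = −∇₁h(ẑ(a)). -/
/-!
Write `w(a)` for the maximiser in the definition of `g(a)`. Since `g(a₁, ·)` lies above the
affine function `y ↦ g(a) + (y - a₂) ⬝ᵥ w(a)` and touches it at `a₂`, its gradient there is
`w(a)`; so `ẑ(a) = (a₁, w(a))` and (1) is the defining equation of `g(a)`.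

For (2), testing the suprema at `a₁ + s v` and at `a₁` with the maximisers of each other gives
`h(a₁, w₀) - h(a₁ + s v, w₀) ≤ g(a₁ + s v, a₂) - g(a) ≤ h(a₁, w_s) - h(a₁ + s v, w_s)`.
Both bounds have derivative `-∇₁h(a₁, w₀) ⬝ᵥ v` at `s = 0`: the lower one by assumption, the
upper one because `w_s → w₀` and `h` is strictly differentiable at `(a₁, w₀)`. The maximiser is
continuous because a strictly concave objective has a uniform gap on a small sphere around its
maximiser, which a uniformly close concave objective cannot cross.
-/

open Matrix Set Filter Topology Metric Asymptotics

theorem tendsto_add_smul_nhds_zero {𝕜 E : Type*} [NontriviallyNormedField 𝕜]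
    [NormedAddCommGroup E] [NormedSpace 𝕜 E] (x v : E) :
    Tendsto (fun s : 𝕜 => x + s • v) (𝓝 0) (𝓝 x) :=
  (by fun_prop : Continuous fun s : 𝕜 => x + s • v).tendsto' 0 x (by simp)

theorem HasDerivAt.of_le_of_le {l f u : ℝ → ℝ} {x L : ℝ} (hl : HasDerivAt l L x)
    (hu : HasDerivAt u L x) (hlf : ∀ᶠ y in 𝓝 x, l y ≤ f y) (hfu : ∀ᶠ y in 𝓝 x, f y ≤ u y)
    (hlx : l x = f x) (hux : u x = f x) : HasDerivAt f L x := by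
  rw [hasDerivAt_iff_isLittleO] at *
  refine (IsBigO.of_bound' ?_).trans_isLittleO (hl.norm_left.add hu.norm_left)
  filter_upwards [hlf, hfu] with y hly hyu
  rw [Real.norm_of_nonneg (add_nonneg (norm_nonneg _) (norm_nonneg _))]
  simp only [Real.norm_eq_abs, smul_eq_mul, hlx, hux]
  refine abs_le.2 ⟨?_, ?_⟩ <;>
    linarith [le_abs_self (l y - f x - (y - x) * L), neg_abs_le (l y - f x - (y - x) * L),
      le_abs_self (u y - f x - (y - x) * L), neg_abs_le (u y - f x - (y - x) * L)]

theorem HasStrictFDerivAt.hasDerivAt_comp_add_smul_sub {𝕜 E F : Type*}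
    [NontriviallyNormedField 𝕜] [NormedAddCommGroup E] [NormedSpace 𝕜 E]
    [NormedAddCommGroup F] [NormedSpace 𝕜 F] {f : E → F} {f' : E →L[𝕜] F} {x : E}
    (hf : HasStrictFDerivAt f f' x) {γ : 𝕜 → E} (hγ : Tendsto γ (𝓝 0) (𝓝 x)) (v : E) :
    HasDerivAt (fun s => f (γ s + s • v) - f (γ s)) (f' v) 0 := by
  have hpair : Tendsto (fun s : 𝕜 => (γ s + s • v, γ s)) (𝓝 0) (𝓝 (x, x)) := by
    simpa using (hγ.add (tendsto_add_smul_nhds_zero 0 v)).prodMk_nhds hγ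
  have hsv : (fun s : 𝕜 => (γ s + s • v) - γ s) =O[𝓝 0] fun s => s - 0 :=
    IsBigO.of_bound ‖v‖ (Eventually.of_forall fun s => by simp [norm_smul, mul_comm])
  rw [hasDerivAt_iff_isLittleO]
  simpa [Function.comp_def] using
    ((hasStrictFDerivAt_iff_isLittleO.1 hf).comp_tendsto hpair).trans_isBigO hsv

theorem eq_of_forall_hasLineDerivAt_dotProduct_of_le {n : ℕ} {f : (Fin n → ℝ) → ℝ}
    {x p w : Fin n → ℝ} (hf : ∀ v, HasLineDerivAt ℝ f (p ⬝ᵥ v) x v)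
    (hle : ∀ᶠ y in 𝓝 x, f x + (y - x) ⬝ᵥ w ≤ f y) : p = w := by
  have hdir : ∀ v, p ⬝ᵥ v = w ⬝ᵥ v := by
    intro v
    have hmin : IsLocalMin (fun s : ℝ => f (x + s • v) - s * (w ⬝ᵥ v)) 0 := by
      filter_upwards [(tendsto_add_smul_nhds_zero x v).eventually hle] with s hs
      rw [add_sub_cancel_left, smul_dotProduct, dotProduct_comm, smul_eq_mul] at hs
      simp only [zero_smul, add_zero, zero_mul, sub_zero]
      linarith
    linarith [hmin.hasDerivAt_eq_zero ((hf v).sub (hasDerivAt_mul_const _))]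
  ext i
  simpa using hdir (Pi.single i 1)

theorem mem_and_eq_of_isGreatest_of_hasLineDerivAt {n : ℕ} {U S : Set (Fin n → ℝ)}
    {f φ : (Fin n → ℝ) → ℝ} {x p : Fin n → ℝ} (hU : U ∈ 𝓝 x)
    (hf : ∀ y ∈ U, IsGreatest {t | ∃ z ∈ S, t = y ⬝ᵥ z - φ z} (f y))
    (hp : ∀ v, HasLineDerivAt ℝ f (p ⬝ᵥ v) x v) : p ∈ S ∧ f x = x ⬝ᵥ p - φ p := by
  obtain ⟨⟨w, hwS, hw⟩, -⟩ := hf x (mem_of_mem_nhds hU)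
  have hsupp : ∀ᶠ y in 𝓝 x, f x + (y - x) ⬝ᵥ w ≤ f y := by
    filter_upwards [hU] with y hy
    have := (hf y hy).2 ⟨w, hwS, rfl⟩
    rw [sub_dotProduct]
    linarith
  obtain rfl := eq_of_forall_hasLineDerivAt_dotProduct_of_le hp hsupp
  exact ⟨hwS, hw⟩

theorem tendsto_of_isMaxOn_of_concaveOn {T E : Type*} [TopologicalSpace T]
    [NormedAddCommGroup E] [NormedSpace ℝ E] [ProperSpace E] {P : Set T} {U : Set E} {t₀ : T}
    {φ : T → E → ℝ} {w : T → E} (hP : P ∈ 𝓝 t₀) (hU : IsOpen U)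
    (hφ : ContinuousOn (Function.uncurry φ) (P ×ˢ U)) (hconc : ∀ t ∈ P, ConcaveOn ℝ U (φ t))
    (hstrict : StrictConcaveOn ℝ U (φ t₀)) (hwU : ∀ t ∈ P, w t ∈ U)
    (hmax : ∀ t ∈ P, IsMaxOn (φ t) U (w t)) : Tendsto w (𝓝 t₀) (𝓝 (w t₀)) := by
  have ht₀ := mem_of_mem_nhds hP
  set w₀ := w t₀
  rw [nhds_basis_closedBall.tendsto_right_iff]
  intro ε hε
  obtain ⟨ρ, hρ, hρU⟩ := nhds_basis_closedBall.mem_iff.1 (hU.mem_nhds (hwU t₀ ht₀))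
  set r := min ε ρ
  have hr : 0 < r := lt_min hε hρ
  have hball : closedBall w₀ r ⊆ U := (closedBall_subset_closedBall (min_le_right _ _)).trans hρU
  have hsphere : sphere w₀ r ⊆ U := sphere_subset_closedBall.trans hball
  obtain ⟨δ, hδ, hgap⟩ : ∃ δ > 0, ∀ u ∈ sphere w₀ r, δ ≤ φ t₀ w₀ - φ t₀ u := by
    refine (isCompact_sphere w₀ r).exists_forall_le' (continuousOn_const.sub ?_) fun u hu => ?_
    · exact hφ.comp (by fun_prop : Continuous fun u => (t₀, u)).continuousOn
        fun u hu => ⟨ht₀, hsphere hu⟩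
    have huU := hsphere hu
    refine sub_pos.2 (lt_of_le_of_ne (hmax t₀ ht₀ huU) fun heq => ne_of_mem_sphere hu hr.ne' ?_)
    exact hstrict.eq_of_isMaxOn (fun y hy => (hmax t₀ ht₀ hy).trans heq.ge) (hmax t₀ ht₀) huU
      (hwU t₀ ht₀)
  obtain ⟨V, hV, hVclose⟩ := (isCompact_closedBall w₀ r).mem_uniformity_of_prod
    (hφ.mono (prod_mono_right hball)) ht₀ (dist_mem_uniformity (half_pos hδ))
  rw [nhdsWithin_eq_nhds.2 hP] at hV
  filter_upwards [hV, hP] with t htV htP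
  refine closedBall_subset_closedBall (min_le_left ε ρ) ?_
  by_contra hfar
  rw [mem_closedBall, not_le, dist_comm] at hfar
  set u := AffineMap.lineMap w₀ (w t) (r / dist w₀ (w t))
  have hd : 0 < dist w₀ (w t) := hr.trans hfar
  have hu : u ∈ sphere w₀ r := by
    rw [mem_sphere, dist_lineMap_left, Real.norm_eq_abs, abs_of_pos (div_pos hr hd),
      div_mul_cancel₀ _ hd.ne']
  have hseg : u ∈ segment ℝ w₀ (w t) :=
    lineMap_mem_segment ℝ _ _ ⟨(div_pos hr hd).le, (div_le_one hd).2 hfar.le⟩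
  have hmin := (hconc t htP).ge_on_segment (hball (mem_closedBall_self hr.le)) (hwU t htP) hseg
  rw [min_eq_left (hmax t htP (hball (mem_closedBall_self hr.le)))] at hmin
  have h₁ := hVclose t htV u (sphere_subset_closedBall hu)
  have h₂ := hVclose t htV w₀ (mem_closedBall_self hr.le)
  rw [mem_ofPred_eq, Real.dist_eq, abs_lt] at h₁ h₂
  linarith [hgap u hu]

theorem HasStrictFDerivAt.hasDerivAt_envelope {E₁ E₂ : Type*} [NormedAddCommGroup E₁]
    [NormedSpace ℝ E₁] [NormedAddCommGroup E₂] [NormedSpace ℝ E₂] {h : E₁ × E₂ → ℝ}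
    {D : E₁ × E₂ →L[ℝ] ℝ} {ℓ : E₂ → ℝ} {S : Set E₂} {W : E₁ → E₂} {x : E₁}
    (hh : HasStrictFDerivAt h D (x, W x)) (hW : Tendsto W (𝓝 x) (𝓝 (W x)))
    (hmax : ∀ᶠ y in 𝓝 x, W y ∈ S ∧ IsMaxOn (fun z => ℓ z - h (y, z)) S (W y)) (v : E₁) :
    HasDerivAt (fun s : ℝ => ℓ (W (x + s • v)) - h (x + s • v, W (x + s • v))) (-D (v, 0)) 0 := by
  have hline := tendsto_add_smul_nhds_zero (𝕜 := ℝ) x v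
  have hlower := (hh.hasDerivAt_comp_add_smul_sub tendsto_const_nhds (v, 0)).const_sub
    (ℓ (W x) - h (x, W x))
  have hupper := (hh.hasDerivAt_comp_add_smul_sub
    (tendsto_const_nhds.prodMk_nhds (hW.comp hline)) (v, 0)).const_sub (ℓ (W x) - h (x, W x))
  refine HasDerivAt.of_le_of_le hlower hupper ?_ ?_ (by simp) (by simp)
  · filter_upwards [hline.eventually hmax] with s hs
    have := hs.2 hmax.self_of_nhds.1
    simp only [mem_ofPred_eq, Prod.smul_mk, Prod.mk_add_mk, smul_zero, add_zero] at this ⊢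
    linarith
  · filter_upwards [hline.eventually hmax] with s hs
    have := hmax.self_of_nhds.2 hs.1
    simp only [mem_ofPred_eq, Function.comp_apply, Prod.smul_mk, Prod.mk_add_mk, smul_zero,
      add_zero] at this ⊢
    linarith

theorem stmt5_general {n₁ n₂ : ℕ}
    (S₁ : Set (Fin n₁ → ℝ)) (S₂ : Set (Fin n₂ → ℝ))
    (hS₁o : IsOpen S₁) (hS₂o : IsOpen S₂) (hS₂c : Convex ℝ S₂)
    (h g : (Fin n₁ → ℝ) × (Fin n₂ → ℝ) → ℝ)
    (h1 : (Fin n₁ → ℝ) × (Fin n₂ → ℝ) → (Fin n₁ → ℝ))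
    (g2 : (Fin n₁ → ℝ) × (Fin n₂ → ℝ) → (Fin n₂ → ℝ))
    (hconv : ∀ z₁ ∈ S₁, StrictConvexOn ℝ S₂ fun z₂ => h (z₁, z₂))
    -- (iii) `h` is continuously differentiable on `S` jointly in both arguments
    (hjoint : ContDiffOn ℝ 1 h (S₁ ×ˢ S₂))
    (hh1 : ∀ z ∈ S₁ ×ˢ S₂, ∀ v : Fin n₁ → ℝ,
      HasDerivAt (fun s : ℝ => h (z.1 + s • v, z.2)) (h1 z ⬝ᵥ v) 0)
    (hg : ∀ a₁ ∈ S₁, ∀ a₂ ∈ S₂,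
      IsGreatest {y : ℝ | ∃ z₂ ∈ S₂, y = a₂ ⬝ᵥ z₂ - h (a₁, z₂)} (g (a₁, a₂)))
    (hg2 : ∀ a ∈ S₁ ×ˢ S₂, ∀ v : Fin n₂ → ℝ,
      HasDerivAt (fun s : ℝ => g (a.1, a.2 + s • v)) (g2 a ⬝ᵥ v) 0) :
    ∀ a ∈ S₁ ×ˢ S₂,
      h (a.1, g2 a) = g2 a ⬝ᵥ a.2 - g a ∧
      ∀ v : Fin n₁ → ℝ,
        HasDerivAt (fun s : ℝ => g (a.1 + s • v, a.2)) ((-(h1 (a.1, g2 a))) ⬝ᵥ v) 0 := by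
  have hopt : ∀ b₁ ∈ S₁, ∀ b₂ ∈ S₂,
      g2 (b₁, b₂) ∈ S₂ ∧ g (b₁, b₂) = b₂ ⬝ᵥ g2 (b₁, b₂) - h (b₁, g2 (b₁, b₂)) :=
    fun b₁ hb₁ b₂ hb₂ => mem_and_eq_of_isGreatest_of_hasLineDerivAt (f := fun y => g (b₁, y))
      (hS₂o.mem_nhds hb₂) (hg b₁ hb₁) (hg2 (b₁, b₂) ⟨hb₁, hb₂⟩)
  rintro ⟨a₁, a₂⟩ ⟨ha₁, ha₂⟩
  obtain ⟨hw₀, hga⟩ := hopt a₁ ha₁ a₂ ha₂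
  refine ⟨by rw [dotProduct_comm]; linarith, fun v => ?_⟩
  have hmaxOn : ∀ b ∈ S₁, IsMaxOn (fun z => a₂ ⬝ᵥ z - h (b, z)) S₂ (g2 (b, a₂)) :=
    fun b hb z hz => by
      show _ ≤ a₂ ⬝ᵥ g2 (b, a₂) - h (b, g2 (b, a₂))
      rw [← (hopt b hb a₂ ha₂).2]
      exact (hg b hb a₂ ha₂).2 ⟨z, hz, rfl⟩
  have hconcave : ∀ b ∈ S₁, StrictConcaveOn ℝ S₂ fun z => a₂ ⬝ᵥ z - h (b, z) := fun b hb =>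
    (LinearMap.concaveOn (dotProductBilin ℝ ℝ a₂ : (Fin n₂ → ℝ) →ₗ[ℝ] ℝ) hS₂c).sub_strictConvexOn
      (hconv b hb)
  have hW : Tendsto (fun b => g2 (b, a₂)) (𝓝 a₁) (𝓝 (g2 (a₁, a₂))) :=
    tendsto_of_isMaxOn_of_concaveOn (φ := fun b z => a₂ ⬝ᵥ z - h (b, z)) (hS₁o.mem_nhds ha₁) hS₂o
      ((continuous_const.dotProduct continuous_snd).continuousOn.sub hjoint.continuousOn)
      (fun b hb => (hconcave b hb).concaveOn) (hconcave a₁ ha₁)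
      (fun b hb => (hopt b hb a₂ ha₂).1) hmaxOn
  have hD := (hjoint.contDiffAt (prod_mem_nhds (hS₁o.mem_nhds ha₁)
    (hS₂o.mem_nhds hw₀))).hasStrictFDerivAt one_ne_zero
  have hDv : fderiv ℝ h (a₁, g2 (a₁, a₂)) (v, 0) = h1 (a₁, g2 (a₁, a₂)) ⬝ᵥ v :=
    (hD.hasFDerivAt.hasLineDerivAt (v, 0)).unique
      (by simpa [HasLineDerivAt] using hh1 (a₁, g2 (a₁, a₂)) ⟨ha₁, hw₀⟩ v)
  dsimp only
  rw [neg_dotProduct, ← hDv]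
  refine (hD.hasDerivAt_envelope (ℓ := fun z => a₂ ⬝ᵥ z) (S := S₂) hW ?_ v).congr_of_eventuallyEq ?_
  · filter_upwards [hS₁o.mem_nhds ha₁] with b hb using ⟨(hopt b hb a₂ ha₂).1, hmaxOn b hb⟩
  · filter_upwards [(tendsto_add_smul_nhds_zero (𝕜 := ℝ) a₁ v).eventually (hS₁o.mem_nhds ha₁)]
      with s hs using (hopt _ hs a₂ ha₂).2

/-- For every `a = (a₁,a₂) ∈ S`:
(1) `h(ẑ(a)) = ∇₂g(a) · a₂ − g(a)`, where `ẑ(a) = (a₁, ∇₂g(a))`;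
(2) `g` is differentiable with respect to its first argument at `a` with partial
gradient `∇₁g(a) = −∇₁h(ẑ(a))`. -/
theorem stmt5 {n₁ n₂ : ℕ} (hn₁ : 0 < n₁) (hn₂ : 0 < n₂)
    (S₁ : Set (Fin n₁ → ℝ)) (S₂ : Set (Fin n₂ → ℝ))
    (hS₁o : IsOpen S₁) (hS₁c : Convex ℝ S₁) (hS₂o : IsOpen S₂) (hS₂c : Convex ℝ S₂)
    (h g : (Fin n₁ → ℝ) × (Fin n₂ → ℝ) → ℝ)
    (h1 : (Fin n₁ → ℝ) × (Fin n₂ → ℝ) → (Fin n₁ → ℝ))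
    (h2 g2 : (Fin n₁ → ℝ) × (Fin n₂ → ℝ) → (Fin n₂ → ℝ))
    (hconv : ∀ z₁ ∈ S₁, StrictConvexOn ℝ S₂ fun z₂ => h (z₁, z₂))
    -- (iii) `h` is continuously differentiable on `S` jointly in both arguments
    (hjoint : ContDiffOn ℝ 1 h (S₁ ×ˢ S₂))
    (hh1 : ∀ z ∈ S₁ ×ˢ S₂, ∀ v : Fin n₁ → ℝ,
      HasDerivAt (fun s : ℝ => h (z.1 + s • v, z.2)) (h1 z ⬝ᵥ v) 0)
    (hh2 : ∀ z ∈ S₁ ×ˢ S₂, ∀ v : Fin n₂ → ℝ,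
      HasDerivAt (fun s : ℝ => h (z.1, z.2 + s • v)) (h2 z ⬝ᵥ v) 0)
    (hg : ∀ a₁ ∈ S₁, ∀ a₂ ∈ S₂,
      IsGreatest {y : ℝ | ∃ z₂ ∈ S₂, y = a₂ ⬝ᵥ z₂ - h (a₁, z₂)} (g (a₁, a₂)))
    (hg2 : ∀ a ∈ S₁ ×ˢ S₂, ∀ v : Fin n₂ → ℝ,
      HasDerivAt (fun s : ℝ => g (a.1, a.2 + s • v)) (g2 a ⬝ᵥ v) 0)
    (hzS : ∀ a ∈ S₁ ×ˢ S₂, ((a.1 : Fin n₁ → ℝ), g2 a) ∈ S₁ ×ˢ S₂) :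
    ∀ a ∈ S₁ ×ˢ S₂,
      h (a.1, g2 a) = g2 a ⬝ᵥ a.2 - g a ∧
      ∀ v : Fin n₁ → ℝ,
        HasDerivAt (fun s : ℝ => g (a.1 + s • v, a.2)) ((-(h1 (a.1, g2 a))) ⬝ᵥ v) 0 :=
  stmt5_general S₁ S₂ hS₁o hS₂o hS₂c h g h1 g2 hconv hjoint hh1 hg hg2
end

section
/- Fix T > 0, let r̃ : S → [0,∞) be continuous, and for each edge ω ∈ E let z^ω = (z₁^ω, z₂^ω) : [0,T] × [0, ℓ(ω)] → S be continuously differentiable. Assume, for all ω, t, x: (i) ∂ₜz₁^ω = −∂ₓ( ∂₂h(z^ω) ) and (ii) ∂ₜz₂^ω = −∂ₓ( ∂₁h(z^ω) ) − r̃(z^ω) · ∂₂h(z^ω); and assume the coupling conditions at every interior node ν ∈ N₀ and every t ∈ [0,T]: (iii) Σ_{ω incident to ν} n^ω[ν] · ∂₂h(z^ω(t, x_ν^ω)) = 0, and (iv) ∂₁h(z^ω(t, x_ν^ω)) = ∂₁h(z^{ω̃}(t, x_ν^{ω̃})) for any two edges ω, ω̃ incident to ν. Then the Hamiltonian H̃(t)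 = Σ_{ω ∈ E} ∫₀^{ℓ(ω)} h(z^ω(t,x)) dx is differentiable in t and satisfies, for all t ∈ [0,T], H̃'(t) = Σ_{ν ∈ N∂} n^{ω_ν}[ν] · ∂₁h(z^{ω_ν}(t, x_ν^{ω_ν})) · ∂₂h(z^{ω_ν}(t, x_ν^{ω_ν})) − Σ_{ω ∈ E} ∫₀^{ℓ(ω)} r̃(z^ω(t,x)) · ( ∂₂h(z^ω(t,x)) )² dx, and in particular H̃'(t) ≤ Σ_{ν ∈ N∂} n^{ω_ν}[ν] · ∂₁h(z^{ω_ν}(t, x_ν^{ω_ν})) · ∂₂h(z^{ω_ν}(t, x_ν^{ω_ν})), where ω_ν denotes the unique edge incident to the boundary node ν. -/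
/-!
On each edge, the chain rule and equations (i), (ii) give the local energy balance
`∂ₜ h(z) = -∂ₓ(∂₁h(z) ∂₂h(z)) - r̃(z) (∂₂h(z))²`. Differentiating under the integral and
integrating in `x`, the energy of an edge therefore changes at the rate `∂₁h ∂₂h` at its tail
minus `∂₁h ∂₂h` at its head, minus the dissipation `∫ r̃ (∂₂h)²`. Summed over all edges, the
endpoint terms regroup by nodes. At an interior node `∂₁h` has a common value by (iv), so the
node contributes that value times the signed sum of `∂₂h`, which vanishes by (iii); only the
boundary nodes remain, and the dissipation is nonnegative because `r̃ ≥ 0`.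
-/

open Set MeasureTheory Function

section Calculus

variable {E : Type*} [NormedAddCommGroup E] [NormedSpace ℝ E]

theorem intervalIntegral.integral_eq_sub_of_hasDerivWithinAt_Icc [CompleteSpace E]
    {f f' : ℝ → E} {a b : ℝ} (hab : a ≤ b)
    (hf : ∀ x ∈ Icc a b, HasDerivWithinAt f (f' x) (Icc a b) x)
    (hf' : IntervalIntegrable f' volume a b) :
    ∫ x in a..b, f' x = f b - f a :=
  integral_eq_sub_of_hasDeriv_right_of_le hab (fun x hx => (hf x hx).continuousWithinAt)
    (fun x hx => (hf x (Ioo_subset_Icc_self hx)).mono_of_mem_nhdsWithin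
      (Icc_mem_nhdsGT_of_mem ⟨hx.1.le, hx.2⟩))
    hf'

theorem ContinuousOn.intervalIntegral_prod {X : Type*} [TopologicalSpace X]
    [FirstCountableTopology X] {f : X → ℝ → E} {K : Set X} {c d : ℝ} (hK : IsCompact K)
    (hcd : c ≤ d)
    (hf : ContinuousOn (uncurry f) (K ×ˢ Icc c d)) :
    ContinuousOn (fun s => ∫ x in c..d, f s x) K := by
  obtain ⟨M, hM⟩ := (hK.prod isCompact_Icc).exists_bound_of_continuousOn hf
  simp_rw [intervalIntegral.integral_of_le hcd]
  refine continuousOn_of_dominated (bound := fun _ => M) (fun s hs => ?_) (fun s hs => ?_)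
    (integrable_const M) ?_
  · exact ((hf.uncurry_left s hs).mono Ioc_subset_Icc_self).aestronglyMeasurable measurableSet_Ioc
  · filter_upwards [ae_restrict_mem measurableSet_Ioc] with x hx
    exact hM (s, x) ⟨hs, Ioc_subset_Icc_self hx⟩
  · filter_upwards [ae_restrict_mem measurableSet_Ioc] with x hx
    exact hf.uncurry_right x (Ioc_subset_Icc_self hx)

theorem hasDerivWithinAt_intervalIntegral_of_continuousOn [CompleteSpace E]
    {F F' : ℝ → ℝ → E} {a b c d : ℝ} (hcd : c ≤ d)
    (hF : ∀ s ∈ Icc a b, IntervalIntegrable (F s) volume c d)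
    (hF' : ∀ t ∈ Icc a b, ∀ x ∈ Icc c d, HasDerivWithinAt (F · x) (F' t x) (Icc a b) t)
    (hF'c : ContinuousOn (uncurry F') (Icc a b ×ˢ Icc c d)) {t : ℝ} (ht : t ∈ Icc a b) :
    HasDerivWithinAt (fun s => ∫ x in c..d, F s x) (∫ x in c..d, F' t x) (Icc a b) t := by
  -- Mathlib's Leibniz rules need a neighbourhood of `t` in `ℝ`, which fails at `a` and `b`.
  -- Instead, `F s = F a + ∫ σ in a..s, F' σ` and Fubini reduce the claim to the FTC.
  set D := fun σ => ∫ x in c..d, F' σ x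
  have hD : ContinuousOn D (Icc a b) := hF'c.intervalIntegral_prod isCompact_Icc hcd
  have ha : a ∈ Icc a b := ⟨le_rfl, ht.1.trans ht.2⟩
  have hprimitive : ∀ s ∈ Icc a b,
      ∫ x in c..d, F s x = (∫ x in c..d, F a x) + ∫ σ in a..s, D σ := by
    intro s hs
    have hsub : Icc a s ⊆ Icc a b := Icc_subset_Icc_right hs.2
    have hslice : ∀ x ∈ Icc c d, ∫ σ in a..s, F' σ x = F s x - F a x := fun x hx =>
      intervalIntegral.integral_eq_sub_of_hasDerivWithinAt_Icc hs.1
        (fun σ hσ => (hF' σ (hsub hσ) x hx).mono hsub)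
        (((hF'c.uncurry_right x hx).mono hsub).intervalIntegrable_of_Icc hs.1)
    have hswap : ∫ x in c..d, ∫ σ in a..s, F' σ x = ∫ σ in a..s, D σ := by
      refine intervalIntegral_intervalIntegral_swap
        ((ContinuousOn.integrableOn_compact (isCompact_Icc.prod isCompact_Icc) ?_).mono_set
          (prod_mono (uIoc_subset_uIcc.trans (uIcc_of_le hcd).subset)
            (uIoc_subset_uIcc.trans (uIcc_of_le hs.1).subset)))
      exact hF'c.comp continuous_swap.continuousOn
        fun p hp => ⟨hsub hp.2, hp.1⟩
    rw [← hswap, intervalIntegral.integral_congr (g := fun x => F s x - F a x)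
      (fun x hx => hslice x ((uIcc_of_le hcd) ▸ hx)),
      intervalIntegral.integral_sub (hF s hs) (hF a ha)]
    abel
  have : Fact (t ∈ Icc a b) := ⟨ht⟩
  have hFTC : HasDerivWithinAt (fun s => ∫ σ in a..s, D σ) (D t) (Icc a b) t :=
    intervalIntegral.integral_hasDerivWithinAt_right
      ((hD.mono (Icc_subset_Icc_right ht.2)).intervalIntegrable_of_Icc ht.1)
      ⟨Icc a b, self_mem_nhdsWithin, hD.aestronglyMeasurable measurableSet_Icc⟩ (hD t ht)
  exact (hFTC.const_add _).congr hprimitive (hprimitive t ht)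

theorem ContDiffOn.continuousOn_partial_fst {g : ℝ × ℝ → E} {g' : ℝ → ℝ → E} {a b c d : ℝ}
    (hab : a < b) (hcd : c < d) (hg : ContDiffOn ℝ 1 g (Icc a b ×ˢ Icc c d))
    (hg' : ∀ t ∈ Icc a b, ∀ x ∈ Icc c d,
      HasDerivWithinAt (fun s => g (s, x)) (g' t x) (Icc a b) t) :
    ContinuousOn (uncurry g') (Icc a b ×ˢ Icc c d) := by
  set R := Icc a b ×ˢ Icc c d
  have hR : UniqueDiffOn ℝ R := (uniqueDiffOn_Icc hab).prod (uniqueDiffOn_Icc hcd)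
  refine ((hg.continuousOn_fderivWithin hR le_rfl).clm_apply
    (continuousOn_const (c := ((1 : ℝ), (0 : ℝ))))).congr fun p hp => ?_
  have hline : HasDerivWithinAt (fun s => g (s, p.2)) (fderivWithin ℝ g R p (1, 0)) (Icc a b) p.1 :=
    ((hg.differentiableOn one_ne_zero p hp).hasFDerivWithinAt).comp_hasDerivWithinAt p.1
      ((hasDerivWithinAt_id _ _).prodMk (hasDerivWithinAt_const _ _ _))
      fun _ hs => mk_mem_prod hs hp.2
  exact (uniqueDiffOn_Icc hab p.1 hp.1).eq_deriv _ (hg' p.1 hp.1 p.2 hp.2) hline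

theorem fderiv_apply_one_zero_of_hasDerivAt {h : ℝ × ℝ → E} {z : ℝ × ℝ} {d : E}
    (hh : DifferentiableAt ℝ h z) (hd : HasDerivAt (fun x => h (x, z.2)) d z.1) :
    fderiv ℝ h z (1, 0) = d := by
  have hline : HasDerivAt (fun x : ℝ => (x, z.2)) ((1 : ℝ), (0 : ℝ)) z.1 :=
    (hasDerivAt_id _).prodMk (hasDerivAt_const _ _)
  exact (hh.hasFDerivAt.comp_hasDerivAt z.1 hline).unique hd

theorem fderiv_apply_zero_one_of_hasDerivAt {h : ℝ × ℝ → E} {z : ℝ × ℝ} {d : E}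
    (hh : DifferentiableAt ℝ h z) (hd : HasDerivAt (fun y => h (z.1, y)) d z.2) :
    fderiv ℝ h z (0, 1) = d := by
  have hline : HasDerivAt (fun y : ℝ => (z.1, y)) ((0 : ℝ), (1 : ℝ)) z.2 :=
    (hasDerivAt_const _ _).prodMk (hasDerivAt_id _)
  exact (hh.hasFDerivAt.comp_hasDerivAt z.2 hline).unique hd

theorem HasDerivWithinAt.comp_of_partials {h : ℝ × ℝ → E} {d₁ d₂ : E} {γ : ℝ → ℝ × ℝ}
    {γ' : ℝ × ℝ} {s : Set ℝ} {t : ℝ} (hγ : HasDerivWithinAt γ γ' s t)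
    (hh : DifferentiableAt ℝ h (γ t))
    (hd₁ : HasDerivAt (fun x => h (x, (γ t).2)) d₁ (γ t).1)
    (hd₂ : HasDerivAt (fun y => h ((γ t).1, y)) d₂ (γ t).2) :
    HasDerivWithinAt (fun s => h (γ s)) (γ'.1 • d₁ + γ'.2 • d₂) s t := by
  have hsplit : γ' = γ'.1 • ((1 : ℝ), (0 : ℝ)) + γ'.2 • ((0 : ℝ), (1 : ℝ)) := by
    ext <;> simp
  have := hh.hasFDerivAt.comp_hasDerivWithinAt t hγ
  rwa [hsplit, map_add, map_smul, map_smul, fderiv_apply_one_zero_of_hasDerivAt hh hd₁,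
    fderiv_apply_zero_one_of_hasDerivAt hh hd₂] at this

theorem ContDiffOn.continuousOn_of_hasDerivAt_fst {S : Set (ℝ × ℝ)} {h h₁ : ℝ × ℝ → E}
    (hS : IsOpen S) (hh : ContDiffOn ℝ 1 h S)
    (hd₁ : ∀ z ∈ S, HasDerivAt (fun x => h (x, z.2)) (h₁ z) z.1) : ContinuousOn h₁ S :=
  ((hh.continuousOn_fderiv_of_isOpen hS le_rfl).clm_apply continuousOn_const).congr fun z hz =>
    (fderiv_apply_one_zero_of_hasDerivAt
      ((hh.contDiffAt (hS.mem_nhds hz)).differentiableAt one_ne_zero) (hd₁ z hz)).symm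

theorem ContDiffOn.continuousOn_of_hasDerivAt_snd {S : Set (ℝ × ℝ)} {h h₂ : ℝ × ℝ → E}
    (hS : IsOpen S) (hh : ContDiffOn ℝ 1 h S)
    (hd₂ : ∀ z ∈ S, HasDerivAt (fun y => h (z.1, y)) (h₂ z) z.2) : ContinuousOn h₂ S :=
  ((hh.continuousOn_fderiv_of_isOpen hS le_rfl).clm_apply continuousOn_const).congr fun z hz =>
    (fderiv_apply_zero_one_of_hasDerivAt
      ((hh.contDiffAt (hS.mem_nhds hz)).differentiableAt one_ne_zero) (hd₂ z hz)).symm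

end Calculus

theorem hasDerivWithinAt_energy_density {h : ℝ × ℝ → ℝ} {γ : ℝ → ℝ × ℝ} {s : Set ℝ}
    {t d₁ d₂ q p ρ : ℝ} (hh : DifferentiableAt ℝ h (γ t))
    (hd₁ : HasDerivAt (fun x => h (x, (γ t).2)) d₁ (γ t).1)
    (hd₂ : HasDerivAt (fun y => h ((γ t).1, y)) d₂ (γ t).2)
    (hγ₁ : HasDerivWithinAt (fun s => (γ s).1) (-q) s t)
    (hγ₂ : HasDerivWithinAt (fun s => (γ s).2) (-p - ρ * d₂) s t) :
    HasDerivWithinAt (fun s => h (γ s)) (-(p * d₂ + d₁ * q) - ρ * d₂ ^ 2) s t :=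
  ((hγ₁.prodMk hγ₂).comp_of_partials hh hd₁ hd₂).congr_deriv <| by
    simp only [smul_eq_mul]
    ring

theorem hasDerivWithinAt_edge_energy
    {S : Set (ℝ × ℝ)} (hS : IsOpen S) {h h₁ h₂ r : ℝ × ℝ → ℝ} (hh : ContDiffOn ℝ 1 h S)
    (hd₁ : ∀ z ∈ S, HasDerivAt (fun x => h (x, z.2)) (h₁ z) z.1)
    (hd₂ : ∀ z ∈ S, HasDerivAt (fun y => h (z.1, y)) (h₂ z) z.2) (hr : ContinuousOn r S)
    {T L : ℝ} (hT : 0 < T) (hL : 0 < L) {w : ℝ → ℝ → ℝ × ℝ}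
    (hwS : ∀ t ∈ Icc 0 T, ∀ x ∈ Icc 0 L, w t x ∈ S)
    (hw : ContDiffOn ℝ 1 (uncurry w) (Icc 0 T ×ˢ Icc 0 L)) {q p : ℝ → ℝ → ℝ}
    (hq : ∀ t ∈ Icc 0 T, ∀ x ∈ Icc 0 L,
      HasDerivWithinAt (fun y => h₂ (w t y)) (q t x) (Icc 0 L) x ∧
      HasDerivWithinAt (fun s => (w s x).1) (-q t x) (Icc 0 T) t)
    (hp : ∀ t ∈ Icc 0 T, ∀ x ∈ Icc 0 L,
      HasDerivWithinAt (fun y => h₁ (w t y)) (p t x) (Icc 0 L) x ∧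
      HasDerivWithinAt (fun s => (w s x).2) (-p t x - r (w t x) * h₂ (w t x)) (Icc 0 T) t)
    {t : ℝ} (ht : t ∈ Icc 0 T) :
    HasDerivWithinAt (fun s => ∫ x in 0..L, h (w s x))
      (h₁ (w t 0) * h₂ (w t 0) - h₁ (w t L) * h₂ (w t L)
        - ∫ x in 0..L, r (w t x) * h₂ (w t x) ^ 2) (Icc 0 T) t := by
  set R := Icc 0 T ×ˢ Icc 0 L
  have hmaps : MapsTo (uncurry w) R S := fun z hz => hwS z.1 hz.1 z.2 hz.2
  have hwc : ContinuousOn (uncurry w) R := hw.continuousOn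
  have hh₁ : ContinuousOn (fun z => h₁ (uncurry w z)) R :=
    (hh.continuousOn_of_hasDerivAt_fst hS hd₁).comp hwc hmaps
  have hh₂ : ContinuousOn (fun z => h₂ (uncurry w z)) R :=
    (hh.continuousOn_of_hasDerivAt_snd hS hd₂).comp hwc hmaps
  have hrw : ContinuousOn (fun z => r (uncurry w z)) R := hr.comp hwc hmaps
  have hwt : ∀ t ∈ Icc 0 T, ∀ x ∈ Icc 0 L, HasDerivWithinAt (fun s => w s x)
      (-q t x, -p t x - r (w t x) * h₂ (w t x)) (Icc 0 T) t :=
    fun t ht x hx => (hq t ht x hx).2.prodMk (hp t ht x hx).2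
  -- `q` and `p` are continuous because (i) and (ii) express them through `∂ₜ w`.
  have hwt_cont := hw.continuousOn_partial_fst hT hL hwt
  have hqc : ContinuousOn (uncurry q) R :=
    hwt_cont.fst.neg.congr fun z _ => (neg_neg _).symm
  have hpc : ContinuousOn (uncurry p) R :=
    (hwt_cont.snd.neg.sub (hrw.mul hh₂)).congr fun z _ => by simp [uncurry]
  have hht : ∀ t ∈ Icc 0 T, ∀ x ∈ Icc 0 L, HasDerivWithinAt (fun s => h (w s x))
      (-(p t x * h₂ (w t x) + h₁ (w t x) * q t x) - r (w t x) * h₂ (w t x) ^ 2) (Icc 0 T) t :=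
    fun t ht x hx => hasDerivWithinAt_energy_density
      ((hh.contDiffAt (hS.mem_nhds (hwS t ht x hx))).differentiableAt one_ne_zero)
      (hd₁ _ (hwS t ht x hx)) (hd₂ _ (hwS t ht x hx)) (hq t ht x hx).2 (hp t ht x hx).2
  have hflux : ∀ x ∈ Icc 0 L, HasDerivWithinAt (fun y => h₁ (w t y) * h₂ (w t y))
      (p t x * h₂ (w t x) + h₁ (w t x) * q t x) (Icc 0 L) x :=
    fun x hx => (hp t ht x hx).1.mul (hq t ht x hx).1
  have hfluxc : ContinuousOn (uncurry fun t x => p t x * h₂ (w t x) + h₁ (w t x) * q t x) R :=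
    (hpc.mul hh₂).add (hh₁.mul hqc)
  have hdissc : ContinuousOn (uncurry fun t x => r (w t x) * h₂ (w t x) ^ 2) R :=
    hrw.mul (hh₂.pow 2)
  have hhw : ContinuousOn (uncurry fun s x => h (w s x)) R := hh.continuousOn.comp hwc hmaps
  have hflux_int : IntervalIntegrable (fun x => -(p t x * h₂ (w t x) + h₁ (w t x) * q t x))
      volume 0 L :=
    (hfluxc.uncurry_left t ht).neg.intervalIntegrable_of_Icc hL.le
  refine (hasDerivWithinAt_intervalIntegral_of_continuousOn hL.le
    (fun s hs => (hhw.uncurry_left s hs).intervalIntegrable_of_Icc hL.le)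
    hht (hfluxc.neg.sub hdissc) ht).congr_deriv ?_
  rw [intervalIntegral.integral_sub hflux_int
      ((hdissc.uncurry_left t ht).intervalIntegrable_of_Icc hL.le),
    intervalIntegral.integral_neg,
    intervalIntegral.integral_eq_sub_of_hasDerivWithinAt_Icc hL.le hflux
      ((hfluxc.uncurry_left t ht).intervalIntegrable_of_Icc hL.le), neg_sub]

section Network

variable {V EI : Type*} [Fintype EI] [DecidableEq V] (α β : EI → V)

/-- For `A`, `B` the values of a quantity at the tails (`x = 0`) and heads (`x = ℓ`) of the
edges, this is `∑_ω n^ω[ν] · (value at the end of ω at ν)`. -/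
def incidenceSum (A B : EI → ℝ) (ν : V) : ℝ :=
  ∑ ω, ((if α ω = ν then A ω else 0) - (if β ω = ν then B ω else 0))

theorem sum_incidenceSum [Fintype V] (A B : EI → ℝ) :
    ∑ ν, incidenceSum α β A B ν = ∑ ω, (A ω - B ω) := by
  simp only [incidenceSum]
  rw [Finset.sum_comm]
  simp [Finset.sum_sub_distrib]

theorem incidenceSum_mul_of_eq (c : ℝ) {f₀ f₁ : EI → ℝ} (g₀ g₁ : EI → ℝ) {ν : V}
    (hf₀ : ∀ ω, α ω = ν → f₀ ω = c) (hf₁ : ∀ ω, β ω = ν → f₁ ω = c) :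
    incidenceSum α β (fun ω => f₀ ω * g₀ ω) (fun ω => f₁ ω * g₁ ω) ν =
      c * incidenceSum α β g₀ g₁ ν := by
  rw [incidenceSum, incidenceSum, Finset.mul_sum]
  refine Finset.sum_congr rfl fun ω _ => ?_
  by_cases hα : α ω = ν <;> by_cases hβ : β ω = ν <;> simp [hα, hβ, hf₀ ω, hf₁ ω, mul_sub]

variable {α β}

theorem incidenceSum_mul_eq_zero (hαβ : ∀ ω, α ω ≠ β ω) {f₀ f₁ g₀ g₁ : EI → ℝ} {ν : V}
    (hg : incidenceSum α β g₀ g₁ ν = 0)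
    (hf : ∀ ω ω', (α ω = ν ∨ β ω = ν) → (α ω' = ν ∨ β ω' = ν) →
      (if α ω = ν then f₀ ω else f₁ ω) = (if α ω' = ν then f₀ ω' else f₁ ω')) :
    incidenceSum α β (fun ω => f₀ ω * g₀ ω) (fun ω => f₁ ω * g₁ ω) ν = 0 := by
  by_cases hex : ∃ ω₀, α ω₀ = ν ∨ β ω₀ = ν
  · obtain ⟨ω₀, hω₀⟩ := hex
    rw [incidenceSum_mul_of_eq α β _ g₀ g₁ (fun ω hα => by simpa [hα] using hf ω ω₀ (.inl hα) hω₀)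
      (fun ω hβ => by
        have hα : α ω ≠ ν := fun hα => hαβ ω (hα.trans hβ.symm)
        simpa [hα] using hf ω ω₀ (.inr hβ) hω₀),
      hg, mul_zero]
  · push Not at hex
    exact Finset.sum_eq_zero fun ω _ => by simp [(hex ω).1, (hex ω).2]

theorem incidenceSum_of_unique (hαβ : ∀ ω, α ω ≠ β ω) (A B : EI → ℝ) {ν : V} {ω₀ : EI}
    (hinc : α ω₀ = ν ∨ β ω₀ = ν) (huniq : ∀ ω, (α ω = ν ∨ β ω = ν) → ω = ω₀) :
    incidenceSum α β A B ν = if α ω₀ = ν then A ω₀ else -B ω₀ := by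
  rw [incidenceSum, Finset.sum_eq_single ω₀ (fun ω _ hne => ?_) (by simp)]
  · rcases hinc with hα | hβ
    · have hβ : β ω₀ ≠ ν := fun hβ => hαβ ω₀ (hα.trans hβ.symm)
      simp [hα, hβ]
    · have hα : α ω₀ ≠ ν := fun hα => hαβ ω₀ (hα.trans hβ.symm)
      simp [hα, hβ]
  · have hα : α ω ≠ ν := fun hα => hne (huniq ω (.inl hα))
    have hβ : β ω ≠ ν := fun hβ => hne (huniq ω (.inr hβ))
    simp [hα, hβ]

theorem sum_sub_eq_sum_boundary [Fintype V] (hαβ : ∀ ω, α ω ≠ β ω) (N₀ : Finset V)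
    (bedge : V → EI) (hb : ∀ ν ∉ N₀, (α (bedge ν) = ν ∨ β (bedge ν) = ν) ∧
      ∀ ω, (α ω = ν ∨ β ω = ν) → ω = bedge ν)
    {f₀ f₁ g₀ g₁ : EI → ℝ} (hg : ∀ ν ∈ N₀, incidenceSum α β g₀ g₁ ν = 0)
    (hf : ∀ ν ∈ N₀, ∀ ω ω', (α ω = ν ∨ β ω = ν) → (α ω' = ν ∨ β ω' = ν) →
      (if α ω = ν then f₀ ω else f₁ ω) = (if α ω' = ν then f₀ ω' else f₁ ω')) :
    ∑ ω, (f₀ ω * g₀ ω - f₁ ω * g₁ ω) =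
      ∑ ν ∈ N₀ᶜ, if α (bedge ν) = ν then f₀ (bedge ν) * g₀ (bedge ν)
        else -(f₁ (bedge ν) * g₁ (bedge ν)) := by
  rw [← sum_incidenceSum α β, ← Finset.sum_add_sum_compl N₀,
    Finset.sum_eq_zero fun ν hν => incidenceSum_mul_eq_zero hαβ (hg ν hν) (hf ν hν), zero_add]
  refine Finset.sum_congr rfl fun ν hν => ?_
  obtain ⟨hinc, huniq⟩ := hb ν (Finset.mem_compl.1 hν)
  exact incidenceSum_of_unique hαβ _ _ hinc huniq

end Network

theorem stmt9_general {V EI : Type*} [Fintype V] [Fintype EI] [DecidableEq V]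
    (α β : EI → V) (hαβ : ∀ ω, α ω ≠ β ω)
    (ℓ : EI → ℝ) (hℓ : ∀ ω, 0 < ℓ ω)
    (N₀ : Finset V)
    (bedge : V → EI)
    (hb : ∀ ν ∉ N₀, (α (bedge ν) = ν ∨ β (bedge ν) = ν) ∧
      ∀ ω, (α ω = ν ∨ β ω = ν) → ω = bedge ν)
    (S : Set (ℝ × ℝ)) (hSo : IsOpen S)
    (h h1 h2 : ℝ × ℝ → ℝ) (hC2 : ContDiffOn ℝ 2 h S)
    (hd1 : ∀ z ∈ S, HasDerivAt (fun x => h (x, z.2)) (h1 z) z.1)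
    (hd2 : ∀ z ∈ S, HasDerivAt (fun y => h (z.1, y)) (h2 z) z.2)
    (rt : ℝ × ℝ → ℝ) (hrtc : ContinuousOn rt S) (hrt : ∀ z ∈ S, 0 ≤ rt z)
    (T : ℝ) (hT : 0 < T)
    (z : EI → ℝ → ℝ → ℝ × ℝ)
    (hzS : ∀ ω, ∀ t ∈ Set.Icc (0:ℝ) T, ∀ x ∈ Set.Icc (0:ℝ) (ℓ ω), z ω t x ∈ S)
    (hzC1 : ∀ ω, ContDiffOn ℝ 1 (fun p : ℝ × ℝ => z ω p.1 p.2)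
      (Set.Icc (0:ℝ) T ×ˢ Set.Icc (0:ℝ) (ℓ ω)))
    -- (i) ∂ₜ z₁^ω = −∂ₓ( ∂₂h(z^ω) )
    (q : EI → ℝ → ℝ → ℝ)
    (hq : ∀ ω, ∀ t ∈ Set.Icc (0:ℝ) T, ∀ x ∈ Set.Icc (0:ℝ) (ℓ ω),
      HasDerivWithinAt (fun y => h2 (z ω t y)) (q ω t x) (Set.Icc (0:ℝ) (ℓ ω)) x ∧
      HasDerivWithinAt (fun s => (z ω s x).1) (-(q ω t x)) (Set.Icc (0:ℝ) T) t)
    -- (ii) ∂ₜ z₂^ω = −∂ₓ( ∂₁h(z^ω) ) − r̃(z^ω)·∂₂h(z^ω)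
    (p : EI → ℝ → ℝ → ℝ)
    (hp : ∀ ω, ∀ t ∈ Set.Icc (0:ℝ) T, ∀ x ∈ Set.Icc (0:ℝ) (ℓ ω),
      HasDerivWithinAt (fun y => h1 (z ω t y)) (p ω t x) (Set.Icc (0:ℝ) (ℓ ω)) x ∧
      HasDerivWithinAt (fun s => (z ω s x).2)
        (-(p ω t x) - rt (z ω t x) * h2 (z ω t x)) (Set.Icc (0:ℝ) T) t)
    -- (iii) conservation of mass flux at interior nodes
    (hcoup : ∀ ν ∈ N₀, ∀ t ∈ Set.Icc (0:ℝ) T,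
      ∑ ω : EI, ((if α ω = ν then h2 (z ω t 0) else 0) -
        (if β ω = ν then h2 (z ω t (ℓ ω)) else 0)) = 0)
    -- (iv) continuity of ∂₁h at interior nodes
    (hcont : ∀ ν ∈ N₀, ∀ t ∈ Set.Icc (0:ℝ) T, ∀ ω ω' : EI,
      (α ω = ν ∨ β ω = ν) → (α ω' = ν ∨ β ω' = ν) →
      h1 (z ω t (if α ω = ν then 0 else ℓ ω)) = h1 (z ω' t (if α ω' = ν then 0 else ℓ ω'))) :
    ∀ t ∈ Set.Icc (0:ℝ) T,
      HasDerivWithinAt (fun s => ∑ ω : EI, ∫ x in (0:ℝ)..(ℓ ω), h (z ω s x))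
        ((∑ ν ∈ N₀ᶜ, (if α (bedge ν) = ν
            then h1 (z (bedge ν) t 0) * h2 (z (bedge ν) t 0)
            else - (h1 (z (bedge ν) t (ℓ (bedge ν))) * h2 (z (bedge ν) t (ℓ (bedge ν)))))) -
          ∑ ω : EI, ∫ x in (0:ℝ)..(ℓ ω), rt (z ω t x) * (h2 (z ω t x))^2)
        (Set.Icc (0:ℝ) T) t ∧
      ((∑ ν ∈ N₀ᶜ, (if α (bedge ν) = ν
            then h1 (z (bedge ν) t 0) * h2 (z (bedge ν) t 0)
            else - (h1 (z (bedge ν) t (ℓ (bedge ν))) * h2 (z (bedge ν) t (ℓ (bedge ν)))))) -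
          ∑ ω : EI, ∫ x in (0:ℝ)..(ℓ ω), rt (z ω t x) * (h2 (z ω t x))^2) ≤
        ∑ ν ∈ N₀ᶜ, (if α (bedge ν) = ν
            then h1 (z (bedge ν) t 0) * h2 (z (bedge ν) t 0)
            else - (h1 (z (bedge ν) t (ℓ (bedge ν))) * h2 (z (bedge ν) t (ℓ (bedge ν))))) := by
  intro t ht
  have hedge := fun ω => hasDerivWithinAt_edge_energy hSo (hC2.of_le (by norm_num)) hd1 hd2 hrtc
    hT (hℓ ω) (hzS ω) (hzC1 ω) (hq ω) (hp ω) ht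
  have hbdry := sum_sub_eq_sum_boundary hαβ N₀ bedge hb
    (f₀ := fun ω => h1 (z ω t 0)) (f₁ := fun ω => h1 (z ω t (ℓ ω)))
    (fun ν hν => hcoup ν hν t ht) (fun ν hν ω ω' hω hω' => by
      simpa only [apply_ite] using hcont ν hν t ht ω ω' hω hω')
  have hsum := HasDerivWithinAt.fun_sum (u := Finset.univ) fun ω _ => hedge ω
  rw [Finset.sum_sub_distrib, hbdry] at hsum
  refine ⟨hsum, sub_le_self _ (Finset.sum_nonneg fun ω _ => ?_)⟩
  exact intervalIntegral.integral_nonneg (hℓ ω).le fun x hx =>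
    mul_nonneg (hrt _ (hzS ω t ht x hx)) (sq_nonneg _)

/-- Energy dissipation on a network: if on each edge
`∂ₜz₁^ω = −∂ₓ(∂₂h(z^ω))` and `∂ₜz₂^ω = −∂ₓ(∂₁h(z^ω)) − r̃(z^ω)·∂₂h(z^ω)` hold, together
with the coupling conditions (conservation of `∂₂h` and continuity of `∂₁h`) at interior
nodes, then the Hamiltonian `H̃(t) = Σ_ω ∫₀^{ℓω} h(z^ω(t,x)) dx` satisfies
`H̃'(t) = Σ_{ν ∈ N∂} n^{ω_ν}[ν] ∂₁h · ∂₂h − Σ_ω ∫ r̃ (∂₂h)² dx ≤ Σ_{ν ∈ N∂} n^{ω_ν}[ν] ∂₁h · ∂₂h`. -/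
theorem stmt9 {V EI : Type*} [Fintype V] [Fintype EI] [DecidableEq V] [DecidableEq EI]
    (α β : EI → V) (hαβ : ∀ ω, α ω ≠ β ω)
    (ℓ : EI → ℝ) (hℓ : ∀ ω, 0 < ℓ ω)
    (N₀ : Finset V)
    (bedge : V → EI)
    (hb : ∀ ν ∉ N₀, (α (bedge ν) = ν ∨ β (bedge ν) = ν) ∧
      ∀ ω, (α ω = ν ∨ β ω = ν) → ω = bedge ν)
    (S : Set (ℝ × ℝ)) (hSo : IsOpen S) (hSc : Convex ℝ S)
    (h h1 h2 : ℝ × ℝ → ℝ) (hC2 : ContDiffOn ℝ 2 h S)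
    (hd1 : ∀ z ∈ S, HasDerivAt (fun x => h (x, z.2)) (h1 z) z.1)
    (hd2 : ∀ z ∈ S, HasDerivAt (fun y => h (z.1, y)) (h2 z) z.2)
    (rt : ℝ × ℝ → ℝ) (hrtc : ContinuousOn rt S) (hrt : ∀ z ∈ S, 0 ≤ rt z)
    (T : ℝ) (hT : 0 < T)
    (z : EI → ℝ → ℝ → ℝ × ℝ)
    (hzS : ∀ ω, ∀ t ∈ Set.Icc (0:ℝ) T, ∀ x ∈ Set.Icc (0:ℝ) (ℓ ω), z ω t x ∈ S)
    (hzC1 : ∀ ω, ContDiffOn ℝ 1 (fun p : ℝ × ℝ => z ω p.1 p.2)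
      (Set.Icc (0:ℝ) T ×ˢ Set.Icc (0:ℝ) (ℓ ω)))
    -- (i) ∂ₜ z₁^ω = −∂ₓ( ∂₂h(z^ω) )
    (q : EI → ℝ → ℝ → ℝ)
    (hq : ∀ ω, ∀ t ∈ Set.Icc (0:ℝ) T, ∀ x ∈ Set.Icc (0:ℝ) (ℓ ω),
      HasDerivWithinAt (fun y => h2 (z ω t y)) (q ω t x) (Set.Icc (0:ℝ) (ℓ ω)) x ∧
      HasDerivWithinAt (fun s => (z ω s x).1) (-(q ω t x)) (Set.Icc (0:ℝ) T) t)
    -- (ii) ∂ₜ z₂^ω = −∂ₓ( ∂₁h(z^ω) ) − r̃(z^ω)·∂₂h(z^ω)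
    (p : EI → ℝ → ℝ → ℝ)
    (hp : ∀ ω, ∀ t ∈ Set.Icc (0:ℝ) T, ∀ x ∈ Set.Icc (0:ℝ) (ℓ ω),
      HasDerivWithinAt (fun y => h1 (z ω t y)) (p ω t x) (Set.Icc (0:ℝ) (ℓ ω)) x ∧
      HasDerivWithinAt (fun s => (z ω s x).2)
        (-(p ω t x) - rt (z ω t x) * h2 (z ω t x)) (Set.Icc (0:ℝ) T) t)
    -- (iii) conservation of mass flux at interior nodes
    (hcoup : ∀ ν ∈ N₀, ∀ t ∈ Set.Icc (0:ℝ) T,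
      ∑ ω : EI, ((if α ω = ν then h2 (z ω t 0) else 0) -
        (if β ω = ν then h2 (z ω t (ℓ ω)) else 0)) = 0)
    -- (iv) continuity of ∂₁h at interior nodes
    (hcont : ∀ ν ∈ N₀, ∀ t ∈ Set.Icc (0:ℝ) T, ∀ ω ω' : EI,
      (α ω = ν ∨ β ω = ν) → (α ω' = ν ∨ β ω' = ν) →
      h1 (z ω t (if α ω = ν then 0 else ℓ ω)) = h1 (z ω' t (if α ω' = ν then 0 else ℓ ω'))) :
    ∀ t ∈ Set.Icc (0:ℝ) T,
      HasDerivWithinAt (fun s => ∑ ω : EI, ∫ x in (0:ℝ)..(ℓ ω), h (z ω s x))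
        ((∑ ν ∈ N₀ᶜ, (if α (bedge ν) = ν
            then h1 (z (bedge ν) t 0) * h2 (z (bedge ν) t 0)
            else - (h1 (z (bedge ν) t (ℓ (bedge ν))) * h2 (z (bedge ν) t (ℓ (bedge ν)))))) -
          ∑ ω : EI, ∫ x in (0:ℝ)..(ℓ ω), rt (z ω t x) * (h2 (z ω t x))^2)
        (Set.Icc (0:ℝ) T) t ∧
      ((∑ ν ∈ N₀ᶜ, (if α (bedge ν) = ν
            then h1 (z (bedge ν) t 0) * h2 (z (bedge ν) t 0)
            else - (h1 (z (bedge ν) t (ℓ (bedge ν))) * h2 (z (bedge ν) t (ℓ (bedge ν)))))) -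
          ∑ ω : EI, ∫ x in (0:ℝ)..(ℓ ω), rt (z ω t x) * (h2 (z ω t x))^2) ≤
        ∑ ν ∈ N₀ᶜ, (if α (bedge ν) = ν
            then h1 (z (bedge ν) t 0) * h2 (z (bedge ν) t 0)
            else - (h1 (z (bedge ν) t (ℓ (bedge ν))) * h2 (z (bedge ν) t (ℓ (bedge ν))))) :=
  stmt9_general α β hαβ ℓ hℓ N₀ bedge hb S hSo h h1 h2 hC2 hd1 hd2 rt hrtc hrt T hT z hzS hzC1 q hq
    p hp hcoup hcont
end

section
/- Let Δt > 0, K ∈ ℕ, and let a⁰, a¹, …, a^K ∈ A together with e^k, f^k ∈ ℝᵖ (k = 1, …, K) satisfy the implicit Euler-type scheme: for every k = 1, …, K, (1/Δt) M₁ ( a₁^k − a₁^{k−1} ) = J a₂^k; (1/Δt) ( ∇₂G(a^k) − ∇₂G(a^{k−1}) ) = Jᵀ M₁⁻¹ ∇₁G(a^k) − R(a^k) a₂^k + K₂ e^k; and f^k = K₂ᵀ a₂^k. Then for all 0 ≤ ℓ < k ≤ K with a^ℓ ≠ a^k: H(a^k) − H(a^ℓ) < Δt · Σ_{j=ℓ+1}^{k}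 ( e^j · f^j − a₂^j · ( R(a^j) a₂^j ) ) ≤ Δt · Σ_{j=ℓ+1}^{k} e^j · f^j. -/
open Matrix Set

/-!
Pairing the first equation of the scheme with `∇₁G(a^k)` and the second with `a₂^k`, the
coupling terms `J` and `Jᵀ M₁⁻¹` cancel (the structure is skew-symmetric), so the right-hand side
of the convexity inequality for the step `a^{k-1} → a^k` is exactly
`Δt (e^k · f^k − a₂^k · R(a^k) a₂^k)`. Summing these step inequalities telescopes; it is strict
because between `a^ℓ ≠ a^k` at least one step moves, and steps that do not move contribute `0`.
-/

namespace Matrix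

variable {α : Type*} [CommRing α] {m n : Type*} [Fintype m] [Fintype n] [DecidableEq m]

lemma dotProduct_eq_of_mulVec_eq {M : Matrix m m α} (hM : M.IsSymm) (hdet : IsUnit M.det)
    {J : Matrix m n α} {d : m → α} {v : n → α} (h : M *ᵥ d = J *ᵥ v) (g : m → α) :
    g ⬝ᵥ d = v ⬝ᵥ Jᵀ *ᵥ (M⁻¹ *ᵥ g) := by
  calc g ⬝ᵥ d = d ⬝ᵥ (M * M⁻¹) *ᵥ g := by
        rw [mul_nonsing_inv M hdet, one_mulVec, dotProduct_comm]
    _ = (M *ᵥ d) ⬝ᵥ M⁻¹ *ᵥ g := by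
        rw [← mulVec_mulVec, dotProduct_mulVec, ← mulVec_transpose, hM.eq]
    _ = v ⬝ᵥ Jᵀ *ᵥ (M⁻¹ *ᵥ g) := by
        rw [h, dotProduct_mulVec v, vecMul_transpose]

end Matrix

section PowerBalance

variable {𝕜 : Type*} [Field 𝕜] {ι₁ ι₂ ι₃ : Type*} [Fintype ι₁] [Fintype ι₂] [Fintype ι₃]
  [DecidableEq ι₁]

lemma power_balance_step {M : Matrix ι₁ ι₁ 𝕜} (hM : M.IsSymm) (hdet : IsUnit M.det)
    (J : Matrix ι₁ ι₂ 𝕜) (R : Matrix ι₂ ι₂ 𝕜) (B : Matrix ι₂ ι₃ 𝕜) {τ : 𝕜} (hτ : τ ≠ 0)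
    {x x' g : ι₁ → 𝕜} {z y y' : ι₂ → 𝕜} (u : ι₃ → 𝕜)
    (h₁ : (1 / τ) • M *ᵥ (x - x') = J *ᵥ z)
    (h₂ : (1 / τ) • (y - y') = Jᵀ *ᵥ (M⁻¹ *ᵥ g) - R *ᵥ z + B *ᵥ u) :
    (-g) ⬝ᵥ (x - x') + z ⬝ᵥ (y - y') = τ * (u ⬝ᵥ Bᵀ *ᵥ z - z ⬝ᵥ R *ᵥ z) := by
  have hx : M *ᵥ (x - x') = J *ᵥ (τ • z) := by
    rw [mulVec_smul, ← h₁, smul_smul, mul_one_div_cancel hτ, one_smul]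
  have hy : y - y' = τ • (Jᵀ *ᵥ (M⁻¹ *ᵥ g) - R *ᵥ z + B *ᵥ u) := by
    rw [← h₂, smul_smul, mul_one_div_cancel hτ, one_smul]
  have hB : z ⬝ᵥ B *ᵥ u = u ⬝ᵥ Bᵀ *ᵥ z := by
    rw [dotProduct_mulVec, ← mulVec_transpose, dotProduct_comm]
  rw [neg_dotProduct, dotProduct_eq_of_mulVec_eq hM hdet hx, hy]
  simp only [smul_dotProduct, dotProduct_smul, dotProduct_add, dotProduct_sub, smul_eq_mul, hB]
  ring

end PowerBalance

section Telescoping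

variable {α : Type*} (a : ℕ → α)

lemma exists_mem_Icc_ne_of_ne {l k : ℕ} (hlk : l ≤ k) (hne : a l ≠ a k) :
    ∃ j ∈ Finset.Icc (l + 1) k, a (j - 1) ≠ a j := by
  by_contra! hstay
  have hconst : ∀ j, l ≤ j → j ≤ k → a l = a j := by
    intro j hlj
    induction j, hlj using Nat.le_induction with
    | base => exact fun _ => rfl
    | succ j hlj ih =>
      intro hjk
      rw [ih (by omega), ← hstay (j + 1) (Finset.mem_Icc.mpr ⟨by omega, hjk⟩),
        Nat.add_sub_cancel]
  exact hne (hconst k hlk le_rfl)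

lemma sub_eq_sum_Icc_sub (h : ℕ → ℝ) {l k : ℕ} (hlk : l ≤ k) :
    h k - h l = ∑ j ∈ Finset.Icc (l + 1) k, (h j - h (j - 1)) := by
  induction k, hlk using Nat.le_induction with
  | base => simp
  | succ k hlk ih =>
    rw [Finset.sum_Icc_succ_top (by omega), ← ih, Nat.add_sub_cancel]
    ring

lemma sub_lt_sum_Icc_of_step_lt (H : α → ℝ) (c : ℕ → ℝ) {l k : ℕ} (hlk : l ≤ k)
    (hne : a l ≠ a k)
    (hmove : ∀ j ∈ Finset.Icc (l + 1) k, a (j - 1) ≠ a j → H (a j) - H (a (j - 1)) < c j)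
    (hstay : ∀ j ∈ Finset.Icc (l + 1) k, a (j - 1) = a j → 0 ≤ c j) :
    H (a k) - H (a l) < ∑ j ∈ Finset.Icc (l + 1) k, c j := by
  refine (sub_eq_sum_Icc_sub (fun j => H (a j)) hlk).trans_lt <| Finset.sum_lt_sum (fun j hj => ?_) ?_
  · by_cases hj' : a (j - 1) = a j
    · simpa [hj'] using hstay j hj hj'
    · exact (hmove j hj hj').le
  · obtain ⟨j, hj, hj'⟩ := exists_mem_Icc_ne_of_ne a hlk hne
    exact ⟨j, hj, hmove j hj hj'⟩

end Telescoping

/-- Energy-dissipation inequality for the implicit Euler-type scheme: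
for a solution `a⁰, …, a^K` of
`(1/Δt) M₁ (a₁^k − a₁^{k−1}) = J a₂^k`,
`(1/Δt) (∇₂G(a^k) − ∇₂G(a^{k−1})) = Jᵀ M₁⁻¹ ∇₁G(a^k) − R(a^k) a₂^k + K₂ e^k`,
`f^k = K₂ᵀ a₂^k`, one has for `0 ≤ ℓ < k ≤ K` with `a^ℓ ≠ a^k`:
`H(a^k) − H(a^ℓ) < Δt Σ_{j=ℓ+1}^k (e^j·f^j − a₂^j·R(a^j)a₂^j) ≤ Δt Σ_{j=ℓ+1}^k e^j·f^j`,
where `H(a) = ∇₂G(a)·a₂ − G(a)`. -/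
theorem stmt15 {n₁ n₂ p : ℕ}
    (A : Set ((Fin n₁ → ℝ) × (Fin n₂ → ℝ)))
    (G : ((Fin n₁ → ℝ) × (Fin n₂ → ℝ)) → ℝ)
    (G1 : ((Fin n₁ → ℝ) × (Fin n₂ → ℝ)) → (Fin n₁ → ℝ))
    (G2 : ((Fin n₁ → ℝ) × (Fin n₂ → ℝ)) → (Fin n₂ → ℝ))
    -- strict convexity inequality for the Hamiltonian (paper's Lemma 6.2)
    (hconv : ∀ a ∈ A, ∀ ab ∈ A, a ≠ ab →
      (G2 a ⬝ᵥ a.2 - G a) - (G2 ab ⬝ᵥ ab.2 - G ab) <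
        (-(G1 a)) ⬝ᵥ (a.1 - ab.1) + a.2 ⬝ᵥ (G2 a - G2 ab))
    (M₁ : Matrix (Fin n₁) (Fin n₁) ℝ) (hM₁ : M₁.PosDef)
    (J : Matrix (Fin n₁) (Fin n₂) ℝ) (K₂ : Matrix (Fin n₂) (Fin p) ℝ)
    (R : ((Fin n₁ → ℝ) × (Fin n₂ → ℝ)) → Matrix (Fin n₂) (Fin n₂) ℝ)
    (hR : ∀ a ∈ A, (R a).PosSemidef)
    (Δt : ℝ) (hΔt : 0 < Δt) (K : ℕ)
    (a : ℕ → (Fin n₁ → ℝ) × (Fin n₂ → ℝ)) (e f : ℕ → Fin p → ℝ)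
    (haA : ∀ k ≤ K, a k ∈ A)
    -- the implicit Euler-type scheme
    (hsch1 : ∀ k, 1 ≤ k → k ≤ K →
      (1 / Δt) • M₁.mulVec ((a k).1 - (a (k - 1)).1) = J.mulVec (a k).2)
    (hsch2 : ∀ k, 1 ≤ k → k ≤ K →
      (1 / Δt) • (G2 (a k) - G2 (a (k - 1))) =
        Jᵀ.mulVec (M₁⁻¹.mulVec (G1 (a k))) - (R (a k)).mulVec (a k).2 + K₂.mulVec (e k))
    (hsch3 : ∀ k, 1 ≤ k → k ≤ K → f k = K₂ᵀ.mulVec (a k).2) :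
    ∀ l k : ℕ, l < k → k ≤ K → a l ≠ a k →
      (G2 (a k) ⬝ᵥ (a k).2 - G (a k)) - (G2 (a l) ⬝ᵥ (a l).2 - G (a l)) <
        Δt * ∑ j ∈ Finset.Icc (l + 1) k,
          (e j ⬝ᵥ f j - (a j).2 ⬝ᵥ (R (a j)).mulVec (a j).2) ∧
      Δt * ∑ j ∈ Finset.Icc (l + 1) k,
          (e j ⬝ᵥ f j - (a j).2 ⬝ᵥ (R (a j)).mulVec (a j).2) ≤
        Δt * ∑ j ∈ Finset.Icc (l + 1) k, e j ⬝ᵥ f j := by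
  intro l k hlk hkK hne
  have hM₁symm : M₁.IsSymm := isHermitian_iff_isSymm.mp hM₁.1
  have hM₁det : IsUnit M₁.det := isUnit_iff_ne_zero.mpr hM₁.det_pos.ne'
  have hbalance : ∀ j ∈ Finset.Icc (l + 1) k,
      (-(G1 (a j))) ⬝ᵥ ((a j).1 - (a (j - 1)).1) + (a j).2 ⬝ᵥ (G2 (a j) - G2 (a (j - 1))) =
        Δt * (e j ⬝ᵥ f j - (a j).2 ⬝ᵥ (R (a j)).mulVec (a j).2) := by
    intro j hj
    obtain ⟨hj1, hjk⟩ := Finset.mem_Icc.mp hj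
    rw [hsch3 j (by omega) (by omega)]
    exact power_balance_step hM₁symm hM₁det J (R (a j)) K₂ hΔt.ne' (e j)
      (hsch1 j (by omega) (by omega)) (hsch2 j (by omega) (by omega))
  simp only [Finset.mul_sum]
  refine ⟨sub_lt_sum_Icc_of_step_lt a (fun b => G2 b ⬝ᵥ b.2 - G b) _ hlk.le hne
    (fun j hj hmove => ?_) (fun j hj hstay => ?_), Finset.sum_le_sum fun j hj => ?_⟩
  · have hjK : j ≤ K := (Finset.mem_Icc.mp hj).2.trans hkK
    rw [← hbalance j hj]
    exact hconv _ (haA j hjK) _ (haA (j - 1) (by omega)) (Ne.symm hmove)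
  · simp [← hbalance j hj, hstay]
  · have hjK : j ≤ K := (Finset.mem_Icc.mp hj).2.trans hkK
    have hdiss := (hR (a j) (haA j hjK)).dotProduct_mulVec_nonneg (a j).2
    simp only [star_trivial] at hdiss
    exact mul_le_mul_of_nonneg_left (sub_le_self _ hdiss) hΔt.le
end
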